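/- Spectral decomposition of the RBF kernel under a non-degenerate multivariate Gaussian measure: let l > 0, v ∈ ℝ^d, and Σ a real symmetric positive definite d×d matrix with orthogonal diagonalisation Σ = Pᵀ D P, D = diag(ν₁,…,ν_d), ν_i > 0, P orthogonal. Set a_i = 1/(4ν_i), b = 1/(2l²), c_i = √(a_i² + 2 a_i b), A_i = a_i + b + c_i, B_i = b/A_i. For a multi-index k⃗ = (k₁,…,k_d) ∈ ℕ^d define Φ_{k⃗}(x) = ∏_{i=1}^d exp(−(c_i − a_i)·z_i²)·H_{k_i}(z_i·√(2 c_i)) where z = P(x − v) and H_n is the n-th physicists' Hermite polynomial, and define λ_{k⃗} = ∏_{i=1}^d (2a_i/A_i)^{1/2} · B_i^{k_i}. Then for all y ∈ ℝ^d, ∫_{ℝ^d} exp(−‖x−y‖²/(2l²)) Φ_{k⃗}(x) p(x) dx = λ_{k⃗} · Φ_{k⃗}(y), where p is the density of N(v, Σ); i.e. Φ_{k⃗} is an eigenfunction of the RBF integral operator with eigenvalue λ_{k⃗}. In particular the largest eigenvalue is λ_{0⃗} = ∏_{i=1}^d (2a_i/A_i)^{1/2}, attained at k⃗ = 0⃗.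 -/

import Mathlib

open MeasureTheory Filter Matrix
open scoped Topology Real

/-! In the coordinates `z = P (x - v)` both the RBF kernel and the `N(v, Σ)` density factor over
the coordinates, and `x ↦ P x` preserves Lebesgue measure, so the integral is a product of
one-dimensional integrals. In each of them, completing the square turns the integrand into a
constant times `exp (-A (t - B w)²) H_k(√(2c) t)`, and
`∫ exp (-s (x - u t)²) H_n(α x) dx = √(π/s) uⁿ H_n(α t)` whenever `u² = 1 - α²/s`: by the
Hermite recurrence and Gaussian integration by parts both sides satisfy the same three-term
recurrence in `n`. -/

/-- The physicists' Hermite polynomials `H_n`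
(`H_n(x) = (−1)^n e^{x²} (d/dx)^n e^{−x²}`), via their standard recurrence
`H₀ = 1`, `H₁(x) = 2x`, `H_{n+1}(x) = 2x·H_n(x) − 2n·H_{n−1}(x)`. -/
noncomputable def hermiteP : ℕ → ℝ → ℝ
  | 0, _ => 1
  | 1, x => 2 * x
  | (n + 2), x => 2 * x * hermiteP (n + 1) x - 2 * (n + 1) * hermiteP n x

open Polynomial Real ProbabilityTheory

noncomputable def hermitePoly : ℕ → ℝ[X]
  | 0 => 1
  | 1 => C 2 * X
  | n + 2 => C 2 * X * hermitePoly (n + 1) - C (2 * ((n : ℝ) + 1)) * hermitePoly n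

theorem hermiteP_eq_eval : ∀ (n : ℕ) (x : ℝ), hermiteP n x = (hermitePoly n).eval x
  | 0, _ => by simp [hermiteP, hermitePoly]
  | 1, _ => by simp [hermiteP, hermitePoly]
  | n + 2, x => by
    simp [hermiteP, hermitePoly, hermiteP_eq_eval n x, hermiteP_eq_eval (n + 1) x]

theorem derivative_hermitePoly_succ : ∀ n : ℕ,
    derivative (hermitePoly (n + 1)) = C (2 * ((n : ℝ) + 1)) * hermitePoly n
  | 0 => by simp [hermitePoly]
  | 1 => by
    simp only [hermitePoly, derivative_sub, derivative_mul, derivative_C, derivative_X,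
      derivative_one, Nat.cast_zero, Nat.cast_one, map_mul, map_add, map_one]
    ring
  | n + 2 => by
    rw [hermitePoly, derivative_sub, derivative_mul, derivative_mul, derivative_C_mul,
      derivative_hermitePoly_succ (n + 1), derivative_hermitePoly_succ n,
      derivative_C, derivative_X, hermitePoly]
    simp only [map_mul, map_add, map_one, map_ofNat, map_natCast]
    push_cast
    ring

theorem hermiteP_mul_eq_eval_comp (n : ℕ) (α x : ℝ) :
    hermiteP n (α * x) = ((hermitePoly n).comp (C α * X)).eval x := by
  simp [hermiteP_eq_eval]

theorem integrable_exp_neg_mul_sq_sub_mul_eval {s : ℝ} (hs : 0 < s) (y : ℝ) (q : ℝ[X]) :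
    Integrable fun x => exp (-s * (x - y) ^ 2) * q.eval x := by
  suffices ∀ q : ℝ[X], Integrable fun x => exp (-s * x ^ 2) * q.eval x by
    have h := (this (q.comp (X + C y))).comp_sub_right y
    simp only [eval_comp, eval_add, eval_X, eval_C, sub_add_cancel] at h
    exact h
  intro q
  induction q using Polynomial.induction_on' with
  | add p q hp hq => simpa [mul_add, Pi.add_def] using hp.add hq
  | monomial n a =>
    have hn : (-1 : ℝ) < n := by linarith [n.cast_nonneg (α := ℝ)]
    simpa [mul_comm, mul_assoc] using
      ((integrable_rpow_mul_exp_neg_mul_sq hs hn).const_mul a)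

section GaussianPolyIntegral

variable {s : ℝ} (hs : 0 < s) (y : ℝ)

noncomputable def gaussianPolyIntegral : ℝ[X] →ₗ[ℝ] ℝ where
  toFun q := ∫ x, exp (-s * (x - y) ^ 2) * q.eval x
  map_add' p q := by
    simp only [eval_add, mul_add]
    exact integral_add (integrable_exp_neg_mul_sq_sub_mul_eval hs y p)
      (integrable_exp_neg_mul_sq_sub_mul_eval hs y q)
  map_smul' a q := by
    simp [mul_left_comm _ a, integral_const_mul]

theorem gaussianPolyIntegral_apply (q : ℝ[X]) :
    gaussianPolyIntegral hs y q = ∫ x, exp (-s * (x - y) ^ 2) * q.eval x := rfl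

theorem gaussianPolyIntegral_C_mul (a : ℝ) (q : ℝ[X]) :
    gaussianPolyIntegral hs y (C a * q) = a * gaussianPolyIntegral hs y q := by
  rw [C_mul', map_smul, smul_eq_mul]

theorem gaussianPolyIntegral_one : gaussianPolyIntegral hs y 1 = √(π / s) := by
  simp only [gaussianPolyIntegral_apply, eval_one, mul_one]
  exact (integral_sub_right_eq_self (fun x => exp (-s * x ^ 2)) y).trans (integral_gaussian s)

/-- Gaussian integration by parts: `g' = -2s (x - y) g` for `g = exp (-s (x - y)²)`, and
`∫ (g q)' = 0`. -/
theorem gaussianPolyIntegral_X_sub_C_mul (q : ℝ[X]) :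
    gaussianPolyIntegral hs y ((X - C y) * q) =
      (2 * s)⁻¹ * gaussianPolyIntegral hs y (derivative q) := by
  have hderiv : ∀ x, HasDerivAt (fun x => exp (-s * (x - y) ^ 2) * q.eval x)
      (exp (-s * (x - y) ^ 2) * (C (-2 * s) * (X - C y) * q + derivative q).eval x) x := by
    intro x
    have hg : HasDerivAt (fun x => exp (-s * (x - y) ^ 2))
        (exp (-s * (x - y) ^ 2) * (-s * (2 * (x - y) ^ 1 * 1))) x :=
      ((((hasDerivAt_id x).sub_const y).pow 2).const_mul (-s)).exp
    refine (hg.mul (q.hasDerivAt x)).congr_deriv ?_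
    simp only [eval_add, eval_mul, eval_C, eval_sub, eval_X]
    ring
  have hzero := integral_eq_zero_of_hasDerivAt_of_integrable hderiv
    (integrable_exp_neg_mul_sq_sub_mul_eval hs y _) (integrable_exp_neg_mul_sq_sub_mul_eval hs y q)
  rw [← gaussianPolyIntegral_apply hs y, map_add, mul_assoc, gaussianPolyIntegral_C_mul] at hzero
  field_simp
  linarith

end GaussianPolyIntegral

section HermiteGaussian

variable {s : ℝ} (hs : 0 < s) (α : ℝ)

theorem gaussianPolyIntegral_hermitePoly_one_comp (y : ℝ) :
    gaussianPolyIntegral hs y ((hermitePoly 1).comp (C α * X)) = 2 * α * y * √(π / s) := by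
  have hsplit :
      (hermitePoly 1).comp (C α * X) = C (2 * α) * ((X - C y) * 1) + C (2 * α * y) * 1 := by
    simp only [hermitePoly, mul_comp, C_comp, X_comp, map_mul]; ring
  rw [hsplit, map_add, gaussianPolyIntegral_C_mul, gaussianPolyIntegral_C_mul,
    gaussianPolyIntegral_X_sub_C_mul, derivative_one, map_zero, gaussianPolyIntegral_one]
  ring

theorem gaussianPolyIntegral_hermitePoly_add_two_comp (y : ℝ) (n : ℕ) :
    gaussianPolyIntegral hs y ((hermitePoly (n + 2)).comp (C α * X)) =
      2 * α * y * gaussianPolyIntegral hs y ((hermitePoly (n + 1)).comp (C α * X)) -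
        2 * (n + 1) * (1 - α ^ 2 / s) *
          gaussianPolyIntegral hs y ((hermitePoly n).comp (C α * X)) := by
  have hsplit : (hermitePoly (n + 2)).comp (C α * X) =
      C (2 * α) * ((X - C y) * (hermitePoly (n + 1)).comp (C α * X)) +
        C (2 * α * y) * (hermitePoly (n + 1)).comp (C α * X) -
        C (2 * ((n : ℝ) + 1)) * (hermitePoly n).comp (C α * X) := by
    simp only [hermitePoly, sub_comp, mul_comp, C_comp, X_comp, map_mul]; ring
  have hderiv : derivative ((hermitePoly (n + 1)).comp (C α * X)) =
      C (α * (2 * ((n : ℝ) + 1))) * (hermitePoly n).comp (C α * X) := by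
    rw [derivative_comp, derivative_hermitePoly_succ, derivative_C_mul_X, mul_comp, C_comp,
      ← mul_assoc, ← map_mul]
  rw [hsplit, map_sub, map_add, gaussianPolyIntegral_C_mul, gaussianPolyIntegral_C_mul,
    gaussianPolyIntegral_C_mul, gaussianPolyIntegral_X_sub_C_mul, hderiv,
    gaussianPolyIntegral_C_mul]
  field_simp
  ring

theorem gaussianPolyIntegral_hermitePoly_comp {u : ℝ} (hu : u ^ 2 = 1 - α ^ 2 / s) (t : ℝ) :
    ∀ n : ℕ, gaussianPolyIntegral hs (u * t) ((hermitePoly n).comp (C α * X)) =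
      √(π / s) * u ^ n * hermiteP n (α * t)
  | 0 => by simp [hermitePoly, hermiteP, gaussianPolyIntegral_one]
  | 1 => by rw [gaussianPolyIntegral_hermitePoly_one_comp, hermiteP]; ring
  | n + 2 => by
    rw [gaussianPolyIntegral_hermitePoly_add_two_comp, gaussianPolyIntegral_hermitePoly_comp hu t n,
      gaussianPolyIntegral_hermitePoly_comp hu t (n + 1), hermiteP, ← hu]
    ring

end HermiteGaussian

theorem integral_rbf_mul_hermite_mul_gaussianPDFReal {ν a b c A B : ℝ} (hν : 0 < ν) (hb : 0 ≤ b)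
    (ha : a = 1 / (4 * ν)) (hc : c = √(a ^ 2 + 2 * a * b)) (hA : A = a + b + c) (hB : B = b / A)
    (k : ℕ) (w : ℝ) :
    ∫ t, exp (-b * (t - w) ^ 2) * (exp (-(c - a) * t ^ 2) * hermiteP k (t * √(2 * c))) *
        gaussianPDFReal 0 ν.toNNReal t =
      √(2 * a / A) * B ^ k * (exp (-(c - a) * w ^ 2) * hermiteP k (w * √(2 * c))) := by
  have ha0 : 0 < a := by rw [ha]; positivity
  have hc0 : 0 ≤ c := hc ▸ sqrt_nonneg _
  have hc2 : c ^ 2 = a ^ 2 + 2 * a * b := hc ▸ sq_sqrt (by positivity)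
  have hA0 : 0 < A := by rw [hA]; positivity
  set α := √(2 * c)
  have hα2 : α ^ 2 = 2 * c := sq_sqrt (by positivity)
  have hu : B ^ 2 = 1 - α ^ 2 / A := by
    rw [hB, hα2]
    field_simp
    rw [hA]
    linear_combination hc2
  have hintegrand : ∀ t, exp (-b * (t - w) ^ 2) * (exp (-(c - a) * t ^ 2) * hermiteP k (t * α)) *
      gaussianPDFReal 0 ν.toNNReal t = (√(2 * a / π) * exp (-(c - a) * w ^ 2)) *
        (exp (-A * (t - B * w) ^ 2) * ((hermitePoly k).comp (C α * X)).eval t) := by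
    intro t
    have hexponent : -b * (t - w) ^ 2 + -(c - a) * t ^ 2 + -(t - 0) ^ 2 / (2 * ν) =
        -(c - a) * w ^ 2 + -A * (t - B * w) ^ 2 := by
      have h2a : -(t - 0) ^ 2 / (2 * ν) = -(2 * a) * t ^ 2 := by
        rw [ha]; field_simp; ring
      rw [h2a, hB]
      field_simp
      rw [hA]
      linear_combination w ^ 2 * hc2
    have hnorm : (√(2 * π * ν))⁻¹ = √(2 * a / π) := by
      rw [← sqrt_inv, ha]
      congr 1
      field_simp
      norm_num
    have hexp := congrArg exp hexponent
    simp only [exp_add] at hexp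
    rw [gaussianPDFReal, Real.coe_toNNReal _ hν.le, hnorm, ← hermiteP_mul_eq_eval_comp,
      mul_comm t α]
    linear_combination √(2 * a / π) * hermiteP k (α * t) * hexp
  have hnorm : √(2 * a / π) * √(π / A) = √(2 * a / A) := by
    rw [← sqrt_mul (by positivity)]
    congr 1
    field_simp
  simp_rw [hintegrand]
  rw [integral_const_mul, ← gaussianPolyIntegral_apply hA0,
    gaussianPolyIntegral_hermitePoly_comp hA0 α hu w k, mul_comm w α, ← hnorm]
  ring

theorem dotProduct_transpose_mul_mul_mulVec {ι : Type*} [Fintype ι] (P M : Matrix ι ι ℝ)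
    (u : ι → ℝ) : u ⬝ᵥ ((Pᵀ * M * P) *ᵥ u) = (P *ᵥ u) ⬝ᵥ (M *ᵥ (P *ᵥ u)) := by
  rw [← mulVec_mulVec, ← mulVec_mulVec, dotProduct_mulVec, vecMul_transpose]

section Orthogonal

variable {ι : Type*} [Fintype ι] [DecidableEq ι] {P : Matrix ι ι ℝ}

theorem abs_det_of_transpose_mul_self (hP : Pᵀ * P = 1) : |P.det| = 1 := by
  have h := congrArg det hP
  rw [det_mul, det_transpose, det_one] at h
  rcases mul_self_eq_one_iff.mp h with h | h <;> simp [h]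

theorem integral_comp_mulVec_of_transpose_mul_self {E : Type*} [NormedAddCommGroup E]
    [NormedSpace ℝ E] (hP : Pᵀ * P = 1) (F : (ι → ℝ) → E) :
    ∫ x, F (P *ᵥ x) = ∫ x, F x := by
  let e := (toLin'OfInv hP (mul_eq_one_comm.mp hP)).toContinuousLinearEquiv.toHomeomorph
    |>.toMeasurableEquiv
  have hdet := abs_det_of_transpose_mul_self hP
  have hmap : Measure.map e volume = volume := by
    have := Real.map_matrix_volume_pi_eq_smul_volume_pi (M := P)
      (abs_ne_zero.mp (hdet ▸ one_ne_zero))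
    rwa [abs_inv, hdet, inv_one, ENNReal.ofReal_one, one_smul] at this
  calc ∫ x, F (P *ᵥ x) = ∫ x, F (e x) := rfl
    _ = ∫ x, F x := by rw [← integral_map_equiv e F, hmap]

theorem integral_prod_mulVec_sub (hP : Pᵀ * P = 1) (v : ι → ℝ) (f : ι → ℝ → ℝ) :
    ∫ x, ∏ i, f i ((P *ᵥ (x - v)) i) = ∏ i, ∫ t, f i t := by
  rw [integral_sub_right_eq_self (fun x => ∏ i, f i ((P *ᵥ x) i)) v,
    integral_comp_mulVec_of_transpose_mul_self hP (fun z => ∏ i, f i (z i)),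
    integral_fintype_prod_volume_eq_prod]

theorem det_transpose_mul_mul_self (hP : Pᵀ * P = 1) (M : Matrix ι ι ℝ) :
    (Pᵀ * M * P).det = M.det := by
  have h := congrArg det hP
  rw [det_mul, det_transpose, det_one] at h
  rw [det_mul, det_mul, det_transpose]
  linear_combination M.det * h

theorem inv_transpose_mul_mul_self (hP : Pᵀ * P = 1) (M : Matrix ι ι ℝ) :
    (Pᵀ * M * P)⁻¹ = Pᵀ * M⁻¹ * P := by
  rw [Matrix.mul_inv_rev, Matrix.mul_inv_rev, inv_eq_left_inv hP, inv_eq_right_inv hP, mul_assoc]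

theorem sum_sq_mulVec_of_transpose_mul_self (hP : Pᵀ * P = 1) (u : ι → ℝ) :
    ∑ i, (P *ᵥ u) i ^ 2 = ∑ i, u i ^ 2 := by
  have h := dotProduct_transpose_mul_mul_mulVec P 1 u
  rw [Matrix.mul_one, hP, one_mulVec, one_mulVec] at h
  simpa [dotProduct, sq] using h.symm

theorem sum_sq_mulVec_sub_sub (hP : Pᵀ * P = 1) (x y v : ι → ℝ) :
    ∑ i, ((P *ᵥ (x - v)) i - (P *ᵥ (y - v)) i) ^ 2 = ∑ i, (x i - y i) ^ 2 := by
  simp_rw [← Pi.sub_apply, ← mulVec_sub, sub_sub_sub_cancel_right]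
  exact sum_sq_mulVec_of_transpose_mul_self hP (x - y)

theorem gaussian_density_eq_prod_gaussianPDFReal {ν : ι → ℝ} (hν : ∀ i, 0 < ν i)
    (hP : Pᵀ * P = 1) (v x : ι → ℝ) :
    (2 * π) ^ (-(Fintype.card ι : ℝ) / 2) * (Pᵀ * diagonal ν * P).det ^ (-(1 : ℝ) / 2) *
        exp (-((x - v) ⬝ᵥ ((Pᵀ * diagonal ν * P)⁻¹ *ᵥ (x - v))) / 2) =
      ∏ i, gaussianPDFReal 0 (ν i).toNNReal ((P *ᵥ (x - v)) i) := by
  set z := P *ᵥ (x - v)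
  have hinv : (diagonal ν)⁻¹ = diagonal ν⁻¹ :=
    inv_eq_left_inv (by simp [diagonal_mul_diagonal, fun i => inv_mul_cancel₀ (hν i).ne'])
  have hconst : (2 * π) ^ (-(Fintype.card ι : ℝ) / 2) * (∏ i, ν i) ^ (-(1 : ℝ) / 2) =
      ∏ i, (√(2 * π * ν i))⁻¹ := by
    have h2π : (0 : ℝ) ≤ 2 * π := by positivity
    simp_rw [sqrt_eq_rpow, ← rpow_neg (mul_nonneg h2π (hν _).le), mul_rpow h2π (hν _).le,
      Finset.prod_mul_distrib, Finset.prod_const, ← finsetProd_rpow _ _ fun i _ => (hν i).le,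
      ← rpow_natCast, ← rpow_mul h2π, Finset.card_univ]
    ring_nf
  have hexponent : -(z ⬝ᵥ (diagonal ν⁻¹ *ᵥ z)) / 2 = ∑ i, -(z i - 0) ^ 2 / (2 * ν i) := by
    simp only [dotProduct, mulVec_diagonal, Pi.inv_apply, Finset.sum_div, ← Finset.sum_neg_distrib,
      neg_div]
    refine Finset.sum_congr rfl fun i _ => ?_
    field_simp
    ring
  rw [det_transpose_mul_mul_self hP, det_diagonal, inv_transpose_mul_mul_self hP,
    dotProduct_transpose_mul_mul_mulVec, hinv, hconst, hexponent, exp_sum,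
    ← Finset.prod_mul_distrib]
  simp only [gaussianPDFReal, Real.coe_toNNReal _ (hν _).le]

end Orthogonal

theorem rbf_gaussian_spectral_decomposition_general
    (d : ℕ) (l : ℝ)
    (v : Fin d → ℝ)
    (S : Matrix (Fin d) (Fin d) ℝ)
    (P : Matrix (Fin d) (Fin d) ℝ) (hP : Pᵀ * P = 1)
    (ν : Fin d → ℝ) (hν : ∀ i, 0 < ν i)
    (hS_diag : S = Pᵀ * Matrix.diagonal ν * P)
    -- the density of the `N(v, Σ)` distribution on `ℝ^d`
    (p : (Fin d → ℝ) → ℝ)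
    (hp : p = fun x => (2 * π) ^ (-(d : ℝ) / 2) * S.det ^ (-(1 : ℝ) / 2) *
      Real.exp (-(dotProduct (x - v) (S⁻¹.mulVec (x - v))) / 2))
    -- the constants of the decomposition
    (a : Fin d → ℝ) (b : ℝ) (c A B : Fin d → ℝ)
    (ha : ∀ i, a i = 1 / (4 * ν i))
    (hb : b = 1 / (2 * l ^ 2))
    (hc : ∀ i, c i = Real.sqrt ((a i) ^ 2 + 2 * a i * b))
    (hA : ∀ i, A i = a i + b + c i)
    (hB : ∀ i, B i = b / A i) :
    -- `Φ_k⃗` is an eigenfunction with eigenvalue `λ_k⃗`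
    (∀ (kv : Fin d → ℕ) (y : Fin d → ℝ),
      ∫ x : Fin d → ℝ,
          Real.exp (-(∑ i, (x i - y i) ^ 2) / (2 * l ^ 2)) *
            (∏ i, Real.exp (-(c i - a i) * (P.mulVec (x - v) i) ^ 2) *
              hermiteP (kv i) (P.mulVec (x - v) i * Real.sqrt (2 * c i))) * p x
        = (∏ i, Real.sqrt (2 * a i / A i) * (B i) ^ (kv i)) *
            ∏ i, Real.exp (-(c i - a i) * (P.mulVec (y - v) i) ^ 2) *
              hermiteP (kv i) (P.mulVec (y - v) i * Real.sqrt (2 * c i))) ∧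
    -- the largest eigenvalue is `λ_0⃗ = ∏ᵢ (2aᵢ/Aᵢ)^{1/2}`, attained at `k⃗ = 0`
    ((∏ i, Real.sqrt (2 * a i / A i) * (B i) ^ ((0 : Fin d → ℕ) i)) =
        ∏ i, Real.sqrt (2 * a i / A i)) ∧
    (∀ kv : Fin d → ℕ,
      (∏ i, Real.sqrt (2 * a i / A i) * (B i) ^ (kv i)) ≤
        ∏ i, Real.sqrt (2 * a i / A i)) := by
  have hb0 : 0 ≤ b := hb ▸ by positivity
  refine ⟨fun kv y => ?_, by simp, fun kv => ?_⟩
  · have hkernel : ∀ x : Fin d → ℝ, exp (-(∑ i, (x i - y i) ^ 2) / (2 * l ^ 2)) =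
        ∏ i, exp (-b * ((P *ᵥ (x - v)) i - (P *ᵥ (y - v)) i) ^ 2) := by
      intro x
      rw [← exp_sum, ← Finset.mul_sum, sum_sq_mulVec_sub_sub hP, hb]
      ring_nf
    have hdensity : ∀ x, p x = ∏ i, gaussianPDFReal 0 (ν i).toNNReal ((P *ᵥ (x - v)) i) := by
      intro x
      simpa [hp, hS_diag] using gaussian_density_eq_prod_gaussianPDFReal hν hP v x
    simp_rw [hkernel, hdensity, ← Finset.prod_mul_distrib]
    rw [integral_prod_mulVec_sub hP v (fun i t => exp (-b * (t - (P *ᵥ (y - v)) i) ^ 2) *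
      (exp (-(c i - a i) * t ^ 2) * hermiteP (kv i) (t * √(2 * c i))) *
        gaussianPDFReal 0 (ν i).toNNReal t)]
    rw [Finset.prod_congr rfl fun i _ => integral_rbf_mul_hermite_mul_gaussianPDFReal (hν i) hb0
      (ha i) (hc i) (hA i) (hB i) (kv i) _, Finset.prod_mul_distrib]
  · have hb_le_A : ∀ i, b ≤ A i := fun i => by
      have : 0 < a i := by rw [ha]; exact one_div_pos.mpr (by linarith [hν i])
      rw [hA, hc]; linarith [sqrt_nonneg (a i ^ 2 + 2 * a i * b)]
    have hB0 : ∀ i, 0 ≤ B i := fun i => hB i ▸ div_nonneg hb0 (hb0.trans (hb_le_A i))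
    have hB1 : ∀ i, B i ≤ 1 := fun i => hB i ▸ div_le_one_of_le₀ (hb_le_A i) (hb0.trans (hb_le_A i))
    refine Finset.prod_le_prod (fun i _ => mul_nonneg (sqrt_nonneg _) (pow_nonneg (hB0 i) _))
      fun i _ => mul_le_of_le_one_right (sqrt_nonneg _) (pow_le_one₀ (hB0 i) (hB1 i))

/-- **Spectral decomposition of the RBF kernel under a non-degenerate multivariate
Gaussian measure.** With `aᵢ = 1/(4νᵢ)`, `b = 1/(2l²)`, `cᵢ = √(aᵢ² + 2aᵢb)`,
`Aᵢ = aᵢ + b + cᵢ`, `Bᵢ = b/Aᵢ`, the functions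
`Φ_k⃗(x) = ∏ᵢ exp(−(cᵢ−aᵢ) zᵢ²) H_{kᵢ}(zᵢ √(2cᵢ))`, `z = P(x−v)`, are eigenfunctions
of the RBF integral operator with respect to the `N(v, Σ)` density, with eigenvalues
`λ_k⃗ = ∏ᵢ (2aᵢ/Aᵢ)^{1/2} Bᵢ^{kᵢ}`; in particular the largest eigenvalue is
`λ_0⃗ = ∏ᵢ (2aᵢ/Aᵢ)^{1/2}`, attained at `k⃗ = 0`. -/
theorem rbf_gaussian_spectral_decomposition
    (d : ℕ) (l : ℝ) (hl : 0 < l)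
    (v : Fin d → ℝ)
    (S : Matrix (Fin d) (Fin d) ℝ) (hS_symm : S.IsSymm) (hS_pd : S.PosDef)
    (P : Matrix (Fin d) (Fin d) ℝ) (hP : Pᵀ * P = 1)
    (ν : Fin d → ℝ) (hν : ∀ i, 0 < ν i)
    (hS_diag : S = Pᵀ * Matrix.diagonal ν * P)
    -- the density of the `N(v, Σ)` distribution on `ℝ^d`
    (p : (Fin d → ℝ) → ℝ)
    (hp : p = fun x => (2 * π) ^ (-(d : ℝ) / 2) * S.det ^ (-(1 : ℝ) / 2) *
      Real.exp (-(dotProduct (x - v) (S⁻¹.mulVec (x - v))) / 2))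
    -- the constants of the decomposition
    (a : Fin d → ℝ) (b : ℝ) (c A B : Fin d → ℝ)
    (ha : ∀ i, a i = 1 / (4 * ν i))
    (hb : b = 1 / (2 * l ^ 2))
    (hc : ∀ i, c i = Real.sqrt ((a i) ^ 2 + 2 * a i * b))
    (hA : ∀ i, A i = a i + b + c i)
    (hB : ∀ i, B i = b / A i) :
    -- `Φ_k⃗` is an eigenfunction with eigenvalue `λ_k⃗`
    (∀ (kv : Fin d → ℕ) (y : Fin d → ℝ),
      ∫ x : Fin d → ℝ,
          Real.exp (-(∑ i, (x i - y i) ^ 2) / (2 * l ^ 2)) *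
            (∏ i, Real.exp (-(c i - a i) * (P.mulVec (x - v) i) ^ 2) *
              hermiteP (kv i) (P.mulVec (x - v) i * Real.sqrt (2 * c i))) * p x
        = (∏ i, Real.sqrt (2 * a i / A i) * (B i) ^ (kv i)) *
            ∏ i, Real.exp (-(c i - a i) * (P.mulVec (y - v) i) ^ 2) *
              hermiteP (kv i) (P.mulVec (y - v) i * Real.sqrt (2 * c i))) ∧
    -- the largest eigenvalue is `λ_0⃗ = ∏ᵢ (2aᵢ/Aᵢ)^{1/2}`, attained at `k⃗ = 0`
    ((∏ i, Real.sqrt (2 * a i / A i) * (B i) ^ ((0 : Fin d → ℕ) i)) =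
        ∏ i, Real.sqrt (2 * a i / A i)) ∧
    (∀ kv : Fin d → ℕ,
      (∏ i, Real.sqrt (2 * a i / A i) * (B i) ^ (kv i)) ≤
        ∏ i, Real.sqrt (2 * a i / A i)) :=
  rbf_gaussian_spectral_decomposition_general d l v S P hP ν hν hS_diag p hp a b c A B ha hb hc hA
    hB
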